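/- arXiv:0806.3992 — 3 statements merged into one kernel-verified Lean document; each statement's English description precedes it below -/
import Mathlib

section
/- Let H be a bounded self-adjoint operator on a Hilbert space decomposed as an orthogonal direct sum 𝓗 = 𝓗₁ ⊕ 𝓗₂, with block decomposition H = [[H₁₁, H₁₂],[H₂₁, H₂₂]]. If z ∈ ℂ is such that z ∉ σ(H₁₁) (as an operator on 𝓗₁), then z ∈ σ(H) if and only if 0 ∈ σ(G(z)), where G(z) := z·1 − H₂₂ − H₂₁ (z − H₁₁)⁻¹ H₁₂ acting on 𝓗₂. -/
open ContinuousLinearMap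

section Schur

variable {H1 H2 : Type*}
    [NormedAddCommGroup H1] [NormedSpace ℂ H1]
    [NormedAddCommGroup H2] [NormedSpace ℂ H2]

/-- Schur complement criterion for invertibility of a block operator. -/
lemma schur_isUnit (A : H1 →L[ℂ] H1) (B : H2 →L[ℂ] H1) (C : H1 →L[ℂ] H2) (D : H2 →L[ℂ] H2)
    (hA : IsUnit A) :
    IsUnit ((A.coprod B).prod (C.coprod D)) ↔
      IsUnit (D - C ∘L Ring.inverse A ∘L B) := by
  set A' := Ring.inverse A with hA'
  have h1 : A ∘L A' = 1 := Ring.mul_inverse_cancel A hA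
  have h2 : A' ∘L A = 1 := Ring.inverse_mul_cancel A hA
  have h1' : ∀ x, A (A' x) = x := fun x => congrArg (fun f => f x) h1
  have h2' : ∀ x, A' (A x) = x := fun x => congrArg (fun f => f x) h2
  set S : H2 →L[ℂ] H2 := D - C ∘L A' ∘L B with hS
  set L : (H1 × H2) →L[ℂ] (H1 × H2) :=
    ((ContinuousLinearMap.id ℂ H1).coprod 0).prod ((C ∘L A').coprod (ContinuousLinearMap.id ℂ H2)) with hL
  set L' : (H1 × H2) →L[ℂ] (H1 × H2) :=
    ((ContinuousLinearMap.id ℂ H1).coprod 0).prod ((-(C ∘L A')).coprod (ContinuousLinearMap.id ℂ H2)) with hL'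
  set U : (H1 × H2) →L[ℂ] (H1 × H2) :=
    ((ContinuousLinearMap.id ℂ H1).coprod (A' ∘L B)).prod ((0 : H1 →L[ℂ] H2).coprod (ContinuousLinearMap.id ℂ H2)) with hU
  set U' : (H1 × H2) →L[ℂ] (H1 × H2) :=
    ((ContinuousLinearMap.id ℂ H1).coprod (-(A' ∘L B))).prod ((0 : H1 →L[ℂ] H2).coprod (ContinuousLinearMap.id ℂ H2)) with hU'
  set M : (H1 × H2) →L[ℂ] (H1 × H2) :=
    (A.coprod 0).prod ((0 : H1 →L[ℂ] H2).coprod S) with hM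
  have hLunit : IsUnit L := by
    refine ⟨⟨L, L', ?_, ?_⟩, rfl⟩ <;>
      · refine ContinuousLinearMap.ext fun p => Prod.ext ?_ ?_ <;>
          simp [hL, hL', ContinuousLinearMap.mul_apply]
  have hUunit : IsUnit U := by
    refine ⟨⟨U, U', ?_, ?_⟩, rfl⟩ <;>
      · refine ContinuousLinearMap.ext fun p => Prod.ext ?_ ?_ <;>
          simp [hU, hU', ContinuousLinearMap.mul_apply]
  have hfact : (A.coprod B).prod (C.coprod D) = L * M * U := by
    refine ContinuousLinearMap.ext fun p => Prod.ext ?_ ?_ <;>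
      · simp only [hL, hM, hU, hS, ContinuousLinearMap.mul_apply, prod_apply, coprod_apply,
          comp_apply, coe_id', id_eq, zero_apply, sub_apply, map_add, zero_add, add_zero,
          h1', h2']
        try abel
  have hmain : IsUnit ((A.coprod B).prod (C.coprod D)) ↔ IsUnit M := by
    rw [hfact, ← hLunit.unit_spec, ← hUunit.unit_spec, Units.isUnit_mul_units,
      Units.isUnit_units_mul]
  rw [hmain]
  constructor
  · rintro ⟨u, hu⟩
    have hMK : M ∘L (↑u⁻¹ : (H1 × H2) →L[ℂ] (H1 × H2)) = 1 := by
      rw [← hu]; exact u.mul_inv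
    have hKM : (↑u⁻¹ : (H1 × H2) →L[ℂ] (H1 × H2)) ∘L M = 1 := by
      rw [← hu]; exact u.inv_mul
    set K : (H1 × H2) →L[ℂ] (H1 × H2) := ↑u⁻¹
    set S' : H2 →L[ℂ] H2 := (snd ℂ H1 H2) ∘L K ∘L (inr ℂ H1 H2) with hS'
    have hMK' : ∀ p : H1 × H2, M (K p) = p := fun p => congrArg (fun f => f p) hMK
    have hKM' : ∀ p : H1 × H2, K (M p) = p := fun p => congrArg (fun f => f p) hKM
    refine ⟨⟨S, S', ?_, ?_⟩, rfl⟩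
    · refine ContinuousLinearMap.ext fun x => ?_
      have h := hMK' (0, x)
      have h2 : (M (K (0, x))).2 = x := by rw [h]
      simpa [hM, ContinuousLinearMap.mul_apply, hS'] using h2
    · refine ContinuousLinearMap.ext fun x => ?_
      have h := hKM' (0, x)
      have hMx : M (0, x) = (0, S x) := by simp [hM]
      rw [hMx] at h
      have h2 : (K (0, S x)).2 = x := by rw [h]
      simpa [ContinuousLinearMap.mul_apply, hS'] using h2
  · intro hSu
    set S' := Ring.inverse S with hS'
    have g1 : ∀ x, S (S' x) = x := fun x =>
      congrArg (fun f => f x) (Ring.mul_inverse_cancel S hSu)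
    have g2 : ∀ x, S' (S x) = x := fun x =>
      congrArg (fun f => f x) (Ring.inverse_mul_cancel S hSu)
    refine ⟨⟨M, (A'.coprod 0).prod ((0 : H1 →L[ℂ] H2).coprod S'), ?_, ?_⟩, rfl⟩ <;>
      · refine ContinuousLinearMap.ext fun p => Prod.ext ?_ ?_ <;>
          simp [hM, ContinuousLinearMap.mul_apply, h1', h2', g1, g2]

end Schur

/-- **Feshbach (Schur complement) method.** For a bounded self-adjoint block operator
`H = [[H₁₁, H₁₂],[H₂₁, H₂₂]]` on `𝓗₁ ⊕ 𝓗₂` and `z ∉ σ(H₁₁)`, one has `z ∈ σ(H)` iff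
`0 ∈ σ(z − H₂₂ − H₂₁ (z − H₁₁)⁻¹ H₁₂)`. -/
theorem feshbach_method {H1 H2 : Type*}
    [NormedAddCommGroup H1] [InnerProductSpace ℂ H1] [CompleteSpace H1]
    [NormedAddCommGroup H2] [InnerProductSpace ℂ H2] [CompleteSpace H2]
    (H11 : H1 →L[ℂ] H1) (H12 : H2 →L[ℂ] H1) (H21 : H1 →L[ℂ] H2) (H22 : H2 →L[ℂ] H2)
    (hH11 : IsSelfAdjoint H11) (hH22 : IsSelfAdjoint H22)
    (hH21 : H21 = ContinuousLinearMap.adjoint H12)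
    (z : ℂ) (hz : z ∉ spectrum ℂ H11) :
    z ∈ spectrum ℂ ((H11.coprod H12).prod (H21.coprod H22)) ↔
      (0 : ℂ) ∈ spectrum ℂ
        (algebraMap ℂ (H2 →L[ℂ] H2) z - H22 -
          H21 ∘L Ring.inverse (algebraMap ℂ (H1 →L[ℂ] H1) z - H11) ∘L H12) := by
  have hA : IsUnit (algebraMap ℂ (H1 →L[ℂ] H1) z - H11) := by
    rw [spectrum.mem_iff, not_not] at hz
    exact hz
  rw [spectrum.mem_iff, spectrum.mem_iff]
  have hblock : algebraMap ℂ ((H1 × H2) →L[ℂ] (H1 × H2)) z -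
      (H11.coprod H12).prod (H21.coprod H22) =
      ((algebraMap ℂ (H1 →L[ℂ] H1) z - H11).coprod (-H12)).prod
        ((-H21).coprod (algebraMap ℂ (H2 →L[ℂ] H2) z - H22)) := by
    refine ContinuousLinearMap.ext fun p => Prod.ext ?_ ?_ <;>
      · simp [Algebra.algebraMap_eq_smul_one, Prod.smul_def, sub_eq_add_neg]
        abel
  rw [hblock, schur_isUnit _ _ _ _ hA]
  have hGeq : algebraMap ℂ (H2 →L[ℂ] H2) z - H22 -
        (-H21) ∘L Ring.inverse (algebraMap ℂ (H1 →L[ℂ] H1) z - H11) ∘L (-H12) =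
      algebraMap ℂ (H2 →L[ℂ] H2) z - H22 -
        H21 ∘L Ring.inverse (algebraMap ℂ (H1 →L[ℂ] H1) z - H11) ∘L H12 := by
    refine ContinuousLinearMap.ext fun x => ?_
    simp
  rw [hGeq]
  have : algebraMap ℂ (H2 →L[ℂ] H2) 0 -
      (algebraMap ℂ (H2 →L[ℂ] H2) z - H22 -
        H21 ∘L Ring.inverse (algebraMap ℂ (H1 →L[ℂ] H1) z - H11) ∘L H12) =
      -(algebraMap ℂ (H2 →L[ℂ] H2) z - H22 -
        H21 ∘L Ring.inverse (algebraMap ℂ (H1 →L[ℂ] H1) z - H11) ∘L H12) := by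
    simp
  rw [this, IsUnit.neg_iff]
end

section
/- Let E and F be orthogonal projections on a Hilbert space with E + F = 1, let S be a bounded self-adjoint operator, and let W be a bounded self-adjoint operator with W ≥ 1. Then for every η > 0, in the sense of quadratic forms: E S F + F S E ≥ −η · E S W⁻¹ S E − η⁻¹ · F W F. -/
/-!
Completing the square: for a positive operator `T`, expanding `0 ≤ re ⟪T (η x + y), η x + y⟫`
and dividing by `η` gives `2 re ⟪T x, y⟫ ≥ -η re ⟪T x, x⟫ - η⁻¹ re ⟪y, T y⟫`. Apply this to
`T = W`, `x = W⁻¹ S E u`, `y = F u`; since `W ≥ 1` in the C⋆-algebra `H →L[ℂ] H`, `W` is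
invertible and `W x = S E u`.
-/

open scoped InnerProductSpace

namespace ContinuousLinearMap

variable {𝕜 E : Type*} [RCLike 𝕜] [NormedAddCommGroup E] [InnerProductSpace 𝕜 E]

open RCLike in
theorem IsPositive.neg_le_two_mul_re_inner {T : E →L[𝕜] E} (hT : T.IsPositive) (x y : E)
    {η : ℝ} (hη : 0 < η) :
    -(η * re ⟪T x, x⟫_𝕜) - η⁻¹ * re ⟪y, T y⟫_𝕜 ≤ 2 * re ⟪T x, y⟫_𝕜 := by
  have hsq : 0 ≤ re ⟪T ((η : 𝕜) • x + y), (η : 𝕜) • x + y⟫_𝕜 := hT.re_inner_nonneg_left _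
  have hsymm : re ⟪T y, x⟫_𝕜 = re ⟪T x, y⟫_𝕜 := by
    rw [hT.inner_left_eq_inner_right, ← inner_conj_symm, conj_re]
  simp only [map_add, map_smul, inner_add_left, inner_add_right, inner_smul_left,
    inner_smul_right, conj_ofReal, re_ofReal_mul, hsymm] at hsq
  rw [← hT.inner_left_eq_inner_right]
  linear_combination mul_nonneg (inv_nonneg.2 hη.le) hsq +
    (η * re ⟪T x, x⟫_𝕜 + 2 * re ⟪T x, y⟫_𝕜) * inv_mul_cancel₀ hη.ne'

variable [CompleteSpace E]

theorem _root_.IsSelfAdjoint.inner_apply_right {A : E →L[𝕜] E} (hA : IsSelfAdjoint A) (x y : E) :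
    ⟪x, A y⟫_𝕜 = ⟪A x, y⟫_𝕜 :=
  (hA.isSymmetric x y).symm

theorem one_le_of_norm_sq_le_re_inner {W : E →L[𝕜] E} (hW : IsSelfAdjoint W)
    (hW1 : ∀ u : E, ‖u‖ ^ 2 ≤ RCLike.re ⟪u, W u⟫_𝕜) : 1 ≤ W := by
  refine ⟨(hW.sub (.one _)).isSymmetric, fun u => ?_⟩
  change 0 ≤ RCLike.re ⟪(W - 1) u, u⟫_𝕜
  rw [sub_apply, one_apply_eq_self, inner_sub_left, map_sub, ← hW.inner_apply_right,
    inner_self_eq_norm_sq, sub_nonneg]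
  exact hW1 u

end ContinuousLinearMap

open ContinuousLinearMap

theorem cross_term_projection_bound_general {H : Type*}
    [NormedAddCommGroup H] [InnerProductSpace ℂ H] [CompleteSpace H]
    (E F S W : H →L[ℂ] H)
    (hE : IsSelfAdjoint E)
    (hF : IsSelfAdjoint F)
    (hS : IsSelfAdjoint S) (hW : IsSelfAdjoint W)
    (hW1 : ∀ u : H, ‖u‖ ^ 2 ≤ (inner ℂ u (W u) : ℂ).re)
    (η : ℝ) (hη : 0 < η) :
    ∀ u : H,
      -(η * (inner ℂ u ((E ∘L S ∘L Ring.inverse W ∘L S ∘L E) u) : ℂ).re) -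
          η⁻¹ * (inner ℂ u ((F ∘L W ∘L F) u) : ℂ).re ≤
        (inner ℂ u ((E ∘L S ∘L F + F ∘L S ∘L E) u) : ℂ).re := by
  have hW_ge_one : 1 ≤ W := one_le_of_norm_sq_le_re_inner hW hW1
  have hW_pos : W.IsPositive := (nonneg_iff_isPositive W).1 (zero_le_one.trans hW_ge_one)
  have hW_inv := Ring.mul_inverse_cancel W (CStarAlgebra.isUnit_of_le 1 hW_ge_one)
  intro u
  set x := Ring.inverse W (S (E u))
  have hWx : W x = S (E u) := congr($hW_inv (S (E u)))
  have key := hW_pos.neg_le_two_mul_re_inner x (F u) hη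
  rw [hWx] at key
  have hESWSE : ⟪u, (E ∘L S ∘L Ring.inverse W ∘L S ∘L E) u⟫_ℂ = ⟪S (E u), x⟫_ℂ := by
    rw [comp_apply, hE.inner_apply_right, comp_apply, hS.inner_apply_right]; rfl
  have hFWF : ⟪u, (F ∘L W ∘L F) u⟫_ℂ = ⟪F u, W (F u)⟫_ℂ := by
    rw [comp_apply, hF.inner_apply_right]; rfl
  have hESF : ⟪u, (E ∘L S ∘L F) u⟫_ℂ = ⟪S (E u), F u⟫_ℂ := by
    rw [comp_apply, hE.inner_apply_right, comp_apply, hS.inner_apply_right]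
  have hFSE : ⟪u, (F ∘L S ∘L E) u⟫_ℂ = ⟪F u, S (E u)⟫_ℂ := by
    rw [comp_apply, hF.inner_apply_right]; rfl
  rw [hESWSE, hFWF, add_apply, inner_add_right, hESF, hFSE, Complex.add_re,
    ← inner_conj_symm (F u) (S (E u)), Complex.conj_re, ← two_mul]
  exact key

/-- Cross-term estimate: if `E`, `F` are orthogonal projections with `E + F = 1`,
`S` is bounded self-adjoint and `W` is bounded self-adjoint with `W ≥ 1`, then for all
`η > 0`, in the sense of quadratic forms,
`E S F + F S E ≥ −η E S W⁻¹ S E − η⁻¹ F W F`. -/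
theorem cross_term_projection_bound {H : Type*}
    [NormedAddCommGroup H] [InnerProductSpace ℂ H] [CompleteSpace H]
    (E F S W : H →L[ℂ] H)
    (hE : IsSelfAdjoint E) (hE' : IsIdempotentElem E)
    (hF : IsSelfAdjoint F) (hF' : IsIdempotentElem F)
    (hEF : E + F = 1)
    (hS : IsSelfAdjoint S) (hW : IsSelfAdjoint W)
    (hW1 : ∀ u : H, ‖u‖ ^ 2 ≤ (inner ℂ u (W u) : ℂ).re)
    (η : ℝ) (hη : 0 < η) :
    ∀ u : H,
      -(η * (inner ℂ u ((E ∘L S ∘L Ring.inverse W ∘L S ∘L E) u) : ℂ).re) -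
          η⁻¹ * (inner ℂ u ((F ∘L W ∘L F) u) : ℂ).re ≤
        (inner ℂ u ((E ∘L S ∘L F + F ∘L S ∘L E) u) : ℂ).re :=
  cross_term_projection_bound_general E F S W hE hF hS hW hW1 η hη
end

section
/- Let f : ℝ → ℝ be continuous and integrable on [0, ∞), and let a > 0. Then lim_{ε→0⁺} ∫₀^∞ (ε / ((r − a)² + ε²)) f(r) dr = π f(a). -/
/-!
After dividing by `π`, the kernels `ε / ((r - a)² + ε²)` form a family of peak functions at `a`:
they are nonnegative, their mass on `[a - δ, a + δ]` is `(2 / π) arctan (δ / ε) → 1`, and they are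
bounded by `ε / δ²` at distance `≥ δ` from `a`. The general convergence theorem for integrals
against peak functions then gives the limit, integrability of `f` controlling the far region.
-/

open MeasureTheory Filter Set Real Topology

/-- `π` times the Poisson kernel of the upper half-plane at `a + iε`, so its total mass is `π`. -/
noncomputable def lorentzian (a ε x : ℝ) : ℝ := ε / ((x - a) ^ 2 + ε ^ 2)

namespace lorentzian

theorem nonneg (a : ℝ) {ε : ℝ} (hε : 0 ≤ ε) (x : ℝ) : 0 ≤ lorentzian a ε x :=
  div_nonneg hε (by positivity)

theorem continuous (a : ℝ) {ε : ℝ} (hε : ε ≠ 0) : Continuous (lorentzian a ε) :=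
  continuous_const.div (by fun_prop) fun x => by positivity

theorem le_of_le_abs_sub {a ε δ x : ℝ} (hε : 0 ≤ ε) (hδ : 0 < δ) (hx : δ ≤ |x - a|) :
    lorentzian a ε x ≤ ε / δ ^ 2 := by
  have hδx : δ ^ 2 ≤ (x - a) ^ 2 := by
    simpa only [sq_abs] using pow_le_pow_left₀ hδ.le hx 2
  exact div_le_div_of_nonneg_left hε (by positivity) (by nlinarith)

theorem intervalIntegral_eq (a ε b c : ℝ) :
    ∫ x in b..c, lorentzian a ε x = arctan ((c - a) / ε) - arctan ((b - a) / ε) := by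
  simp only [lorentzian, add_comm _ (ε ^ 2)]
  rw [intervalIntegral.integral_comp_sub_right (fun x => ε / (ε ^ 2 + x ^ 2)),
    integral_div_sq_add_sq]

theorem tendsto_intervalIntegral (a : ℝ) {δ : ℝ} (hδ : 0 < δ) :
    Tendsto (fun ε => ∫ x in (a - δ)..(a + δ), lorentzian a ε x) (𝓝[>] 0) (𝓝 π) := by
  have hδε : Tendsto (fun ε => δ / ε) (𝓝[>] 0) atTop :=
    tendsto_inv_nhdsGT_zero.const_mul_atTop hδ
  have harctan := ((tendsto_arctan_atTop.mono_right nhdsWithin_le_nhds).comp hδε).const_mul 2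
  rw [mul_div_cancel₀ _ two_ne_zero] at harctan
  refine harctan.congr fun ε => ?_
  rw [intervalIntegral_eq, add_sub_cancel_left, sub_sub_cancel_left, neg_div, arctan_neg]
  simp only [Function.comp_apply]
  ring

theorem tendstoUniformlyOn_compl (a : ℝ) {u : Set ℝ} (hu : u ∈ 𝓝 a) :
    TendstoUniformlyOn (lorentzian a) 0 (𝓝[>] 0) uᶜ := by
  obtain ⟨δ, hδ, hball⟩ := Metric.mem_nhds_iff.1 hu
  have hbound : Tendsto (fun ε => ε / δ ^ 2) (𝓝[>] 0) (𝓝 0) := by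
    simpa using (tendsto_id.div_const (δ ^ 2)).mono_left (nhdsWithin_le_nhds (a := (0 : ℝ)))
  refine Metric.tendstoUniformlyOn_iff.2 fun η hη => ?_
  filter_upwards [self_mem_nhdsWithin, (tendsto_order.1 hbound).2 η hη] with ε hε hεη x hx
  have hδx : δ ≤ |x - a| := by
    by_contra! h
    exact hx (hball (by rwa [Metric.mem_ball, Real.dist_eq]))
  rw [Pi.zero_apply, dist_zero_left, Real.norm_of_nonneg (nonneg a (le_of_lt hε) x)]
  exact (le_of_le_abs_sub (le_of_lt hε) hδ hδx).trans_lt hεη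

end lorentzian

theorem tendsto_setIntegral_lorentzian_smul {E : Type*} [NormedAddCommGroup E] [NormedSpace ℝ E]
    [CompleteSpace E] {f : ℝ → E} {s : Set ℝ} {a : ℝ} (hs : MeasurableSet s) (has : s ∈ 𝓝 a)
    (hf : IntegrableOn f s) (hfa : ContinuousAt f a) :
    Tendsto (fun ε => ∫ x in s, lorentzian a ε x • f x) (𝓝[>] 0) (𝓝 (π • f a)) := by
  obtain ⟨δ, hδ, hδs⟩ := Metric.nhds_basis_closedBall.mem_iff.1 has
  rw [Real.closedBall_eq_Icc] at hδs
  have hmass : Tendsto (fun ε => ∫ x in Ioc (a - δ) (a + δ), π⁻¹ * lorentzian a ε x)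
      (𝓝[>] 0) (𝓝 1) := by
    simp_rw [integral_const_mul, ← intervalIntegral.integral_of_le (by linarith : a - δ ≤ a + δ)]
    simpa [pi_ne_zero] using (lorentzian.tendsto_intervalIntegral a hδ).const_mul π⁻¹
  have hunif : ∀ u, IsOpen u → a ∈ u →
      TendstoUniformlyOn (fun ε x => π⁻¹ * lorentzian a ε x) 0 (𝓝[>] 0) (s \ u) := by
    intro u hu hau
    have := (uniformContinuous_const_smul π⁻¹).comp_tendstoUniformlyOn
      (lorentzian.tendstoUniformlyOn_compl a (hu.mem_nhds hau))
    simpa [Function.comp_def, ← Pi.zero_def] using this.mono (sdiff_subset_compl s u)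
  have hpeak : Tendsto (fun ε => ∫ x in s, (π⁻¹ * lorentzian a ε x) • f x) (𝓝[>] 0) (𝓝 (f a)) :=
    tendsto_setIntegral_peak_smul_of_integrableOn_of_tendsto hs measurableSet_Ioc
      (Ioc_subset_Icc_self.trans hδs)
      (mem_nhdsWithin_of_mem_nhds (Ioc_mem_nhds (by linarith) (by linarith)))
      measure_Ioc_lt_top.ne
      (eventually_nhdsWithin_of_forall fun ε hε x _ =>
        mul_nonneg (inv_nonneg.2 pi_pos.le) (lorentzian.nonneg a (le_of_lt hε) x))
      hunif hmass
      (eventually_nhdsWithin_of_forall fun ε hε =>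
        (continuous_const.mul (lorentzian.continuous a (ne_of_gt hε))).aestronglyMeasurable)
      hf (hfa.mono_left nhdsWithin_le_nhds)
  refine (hpeak.const_smul π).congr fun ε => ?_
  simp_rw [mul_smul, integral_smul, smul_inv_smul₀ pi_ne_zero]

/-- Poisson-kernel (Dirac sequence) limit: for `f` continuous and integrable on `[0,∞)`
and `a > 0`, `lim_{ε→0⁺} ∫₀^∞ ε/((r−a)²+ε²) f(r) dr = π f(a)`. -/
theorem poisson_kernel_limit_pos (f : ℝ → ℝ) (hf : Continuous f)
    (hint : IntegrableOn f (Set.Ici 0)) (a : ℝ) (ha : 0 < a) :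
    Tendsto (fun ε : ℝ => ∫ r in Set.Ioi (0 : ℝ), ε / ((r - a) ^ 2 + ε ^ 2) * f r)
      (nhdsWithin 0 (Set.Ioi 0)) (nhds (Real.pi * f a)) :=
  tendsto_setIntegral_lorentzian_smul measurableSet_Ioi (Ioi_mem_nhds ha)
    (hint.mono_set Ioi_subset_Ici_self) hf.continuousAt
end
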